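/- If (S₁, S₂) has the bivariate Rayleigh density with parameters σ₁², σ₂² > 0 and ρ² ∈ [0,1), then the Pearson correlation coefficient of S₁² and S₂² equals ρ²; that is, Cov[S₁², S₂²]/√(Var[S₁²]·Var[S₂²]) = ρ². -/

import Mathlib

/-!
Integrating the exponential series of `exp (x cos θ)` termwise against `cos θ ^ n` gives
`I₀ x = ∑ (x²/4)^k / (k!)²`. With it the density becomes a series of nonnegative terms, each a
constant times `s₁^(2k+1) e^(-s₁²/(σ₁²(1-ρ²)))` times the same expression in `s₂`, so the
Gamma integral `∫₀^∞ s^(2j+1) e^(-s²/c) ds = j! c^(j+1) / 2` integrates it term by term: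
`E[S₁^(2m) S₂^(2n)] = σ₁^(2m) σ₂^(2n) (1-ρ²)^(m+n+1) ∑ (m+k)! (n+k)! / (k!)² ρ^(2k)`.
For `n = 0` this is a negative binomial series and `E[S₁^(2m)] = m! σ₁^(2m)`; for `m = n = 1`,
`∑ (k+1)² ρ^(2k) = (1+ρ²)/(1-ρ²)³` gives `E[S₁² S₂²] = σ₁² σ₂² (1+ρ²)`. So the covariance of
`S₁², S₂²` is `ρ² σ₁² σ₂²` while their variances are `σ₁⁴` and `σ₂⁴`.
-/

open MeasureTheory Real Set

/-- The zeroth-order modified Bessel function of the first kind,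
I₀(x) = (1/π)∫₀^π exp(x cos φ) dφ. -/
noncomputable def besselI0 (x : ℝ) : ℝ :=
  (1 / Real.pi) * ∫ φ in (0:ℝ)..Real.pi, Real.exp (x * Real.cos φ)

/-- The bivariate Rayleigh density with parameters σ₁², σ₂² and power correlation ρ². -/
noncomputable def bivRayleighPDF (σ1sq σ2sq ρsq s₁ s₂ : ℝ) : ℝ :=
  (4 * s₁ * s₂ / (σ1sq * σ2sq * (1 - ρsq)))
    * Real.exp (-(s₁^2 / σ1sq + s₂^2 / σ2sq) / (1 - ρsq))
    * besselI0 ((2 / (1 - ρsq)) * Real.sqrt (ρsq * (s₁^2 / σ1sq) * (s₂^2 / σ2sq)))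

/-- Expectation of g(s₁,s₂) under the bivariate Rayleigh law. -/
noncomputable def bivRayleighMoment (σ1sq σ2sq ρsq : ℝ) (g : ℝ → ℝ → ℝ) : ℝ :=
  ∫ p in (Ioi (0:ℝ)) ×ˢ (Ioi (0:ℝ)),
    g p.1 p.2 * bivRayleighPDF σ1sq σ2sq ρsq p.1 p.2 ∂(volume : Measure (ℝ × ℝ))

open scoped Nat

lemma integral_cos_pow_two_mul (k : ℕ) :
    ∫ x in (0:ℝ)..π, cos x ^ (2 * k) = π * (2 * k)! / (4 ^ k * (k ! : ℝ) ^ 2) := by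
  induction k with
  | zero => simp
  | succ k ih =>
    rw [mul_add_one, integral_cos_pow, sin_pi, sin_zero, ih,
      show 2 * k + 2 = (2 * k + 1) + 1 by ring, Nat.factorial_succ, Nat.factorial_succ,
      Nat.factorial_succ]
    push_cast
    field_simp
    ring

lemma integral_cos_pow_two_mul_add_one (k : ℕ) :
    ∫ x in (0:ℝ)..π, cos x ^ (2 * k + 1) = 0 := by
  induction k with
  | zero => simp
  | succ k ih =>
    rw [show 2 * (k + 1) + 1 = (2 * k + 1) + 2 by ring, integral_cos_pow, sin_pi, sin_zero, ih]
    ring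

theorem hasSum_besselI0 (x : ℝ) :
    HasSum (fun k : ℕ => (x ^ 2 / 4) ^ k / (k ! : ℝ) ^ 2) (besselI0 x) := by
  have hexp : HasSum (fun n : ℕ => ∫ θ in (0:ℝ)..π, (x * cos θ) ^ n / n !)
      (∫ θ in (0:ℝ)..π, exp (x * cos θ)) := by
    refine intervalIntegral.hasSum_integral_of_dominated_convergence (fun n _ => |x| ^ n / n !)
      (fun n => by fun_prop) (fun n => ae_of_all _ fun θ _ => ?_)
      (ae_of_all _ fun _ _ => summable_pow_div_factorial |x|) intervalIntegrable_const
      (ae_of_all _ fun θ _ => ?_)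
    · rw [norm_div, norm_pow, norm_mul, norm_natCast, Real.norm_eq_abs, Real.norm_eq_abs]
      gcongr
      exact mul_le_of_le_one_right (abs_nonneg x) (abs_cos_le_one θ)
    · rw [exp_eq_exp_ℝ]
      exact NormedSpace.expSeries_div_hasSum_exp _
  have hterm : ∀ n : ℕ, π⁻¹ * ∫ θ in (0:ℝ)..π, (x * cos θ) ^ n / n !
      = π⁻¹ * (x ^ n / n !) * ∫ θ in (0:ℝ)..π, cos θ ^ n := by
    intro n
    simp_rw [mul_pow, ← intervalIntegral.integral_const_mul, mul_assoc]
    congr 1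
    congr 1 with θ
    ring
  have hseries := hexp.mul_left π⁻¹
  simp_rw [hterm] at hseries
  rw [besselI0, one_div]
  set F := fun n : ℕ => π⁻¹ * (x ^ n / n !) * ∫ θ in (0:ℝ)..π, cos θ ^ n
  have hodd : ∀ n ∉ Set.range (2 * ·), F n = 0 := by
    intro n hn
    obtain ⟨k, rfl | rfl⟩ := Nat.even_or_odd' n
    · exact absurd ⟨k, rfl⟩ hn
    · simp [F, integral_cos_pow_two_mul_add_one]
  convert ((mul_right_injective₀ two_ne_zero).hasSum_iff hodd).mpr hseries using 1
  ext k
  simp only [F, Function.comp_apply]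
  rw [integral_cos_pow_two_mul, pow_mul, div_pow]
  field_simp

lemma integrableOn_pow_mul_exp_neg_sq_div (j : ℕ) {c : ℝ} (hc : 0 < c) :
    IntegrableOn (fun s : ℝ => s ^ (2 * j + 1) * exp (-(s ^ 2 / c))) (Ioi 0) := by
  have h := integrableOn_rpow_mul_exp_neg_mul_sq (inv_pos.mpr hc) (s := 2 * j + 1)
    (by linarith [j.cast_nonneg (α := ℝ)])
  refine h.congr_fun (fun s _ => ?_) measurableSet_Ioi
  rw [← Real.rpow_natCast]
  push_cast
  ring_nf

lemma integral_pow_mul_exp_neg_sq_div (j : ℕ) {c : ℝ} (hc : 0 < c) :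
    ∫ s in Ioi (0:ℝ), s ^ (2 * j + 1) * exp (-(s ^ 2 / c)) = j ! * c ^ (j + 1) / 2 := by
  have h := integral_rpow_mul_exp_neg_mul_rpow (p := 2) (q := 2 * j + 1) two_pos
    (by linarith [j.cast_nonneg (α := ℝ)]) (inv_pos.mpr hc)
  have hexponent : (2 * (j : ℝ) + 1 + 1) / 2 = j + 1 := by ring
  rw [neg_div, hexponent, Real.rpow_neg (inv_pos.mpr hc).le, Real.inv_rpow hc.le, inv_inv,
    Gamma_nat_eq_factorial, ← Nat.cast_add_one, Real.rpow_natCast] at h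
  rw [show (j ! : ℝ) * c ^ (j + 1) / 2 = c ^ (j + 1) * (1 / 2) * (j ! : ℝ) by ring, ← h]
  refine setIntegral_congr_fun measurableSet_Ioi (fun s _ => ?_)
  rw [← Real.rpow_natCast, Real.rpow_two]
  push_cast
  ring_nf

lemma hasSum_factorial_add_div_factorial_mul_geometric (m : ℕ) {r : ℝ} (hr : |r| < 1) :
    HasSum (fun k : ℕ => ((m + k)! / k ! : ℝ) * r ^ k) (m ! / (1 - r) ^ (m + 1)) := by
  have h := (hasSum_choose_mul_geometric_of_norm_lt_one m (r := r) hr).mul_left (m ! : ℝ)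
  rw [mul_one_div] at h
  refine h.congr_fun fun k => ?_
  rw [← Nat.choose_symm_add, Nat.cast_add_choose, add_comm k m]
  field_simp

lemma hasSum_succ_sq_mul_geometric {r : ℝ} (hr : |r| < 1) :
    HasSum (fun k : ℕ => ((k : ℝ) + 1) ^ 2 * r ^ k) ((1 + r) / (1 - r) ^ 3) := by
  have hr1 : 1 - r ≠ 0 := by linarith [(abs_lt.mp hr).2]
  have h := (hasSum_factorial_add_div_factorial_mul_geometric 2 hr).sub
    (hasSum_factorial_add_div_factorial_mul_geometric 1 hr)
  have hsum : (2 ! : ℝ) / (1 - r) ^ (2 + 1) - 1 ! / (1 - r) ^ (1 + 1) = (1 + r) / (1 - r) ^ 3 := by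
    field_simp
    norm_num
    ring
  rw [hsum] at h
  refine h.congr_fun fun k => ?_
  rw [add_comm 2 k, add_comm 1 k, Nat.factorial_succ, Nat.factorial_succ]
  push_cast
  field_simp
  ring

/-- The `k`-th term of the expansion of `bivRayleighPDF` given by the power series of `I₀`. -/
noncomputable def bivRayleighPDFTerm (σ1sq σ2sq ρsq : ℝ) (k : ℕ) (s₁ s₂ : ℝ) : ℝ :=
  4 * ρsq ^ k / (σ1sq ^ (k + 1) * σ2sq ^ (k + 1) * (1 - ρsq) ^ (2 * k + 1) * (k ! : ℝ) ^ 2)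
    * (s₁ ^ (2 * k + 1) * exp (-(s₁ ^ 2 / (σ1sq * (1 - ρsq)))))
    * (s₂ ^ (2 * k + 1) * exp (-(s₂ ^ 2 / (σ2sq * (1 - ρsq)))))

section

variable {σ1sq σ2sq ρsq : ℝ}

theorem hasSum_bivRayleighPDFTerm (h1 : 0 ≤ σ1sq) (h2 : 0 ≤ σ2sq) (hρ : 0 ≤ ρsq) (s₁ s₂ : ℝ) :
    HasSum (fun k => bivRayleighPDFTerm σ1sq σ2sq ρsq k s₁ s₂)
      (bivRayleighPDF σ1sq σ2sq ρsq s₁ s₂) := by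
  have hbessel := (hasSum_besselI0 ((2 / (1 - ρsq)) *
    √(ρsq * (s₁ ^ 2 / σ1sq) * (s₂ ^ 2 / σ2sq)))).mul_left
      ((4 * s₁ * s₂ / (σ1sq * σ2sq * (1 - ρsq))) *
        exp (-(s₁ ^ 2 / σ1sq + s₂ ^ 2 / σ2sq) / (1 - ρsq)))
  rw [mul_pow, sq_sqrt (by positivity)] at hbessel
  rw [bivRayleighPDF]
  refine hbessel.congr_fun fun k => ?_
  rw [bivRayleighPDFTerm]
  -- `ring` cannot invert the sum `1 - ρsq`, but it can invert an atom
  generalize 1 - ρsq = t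
  have hexp : exp (-(s₁ ^ 2 / σ1sq + s₂ ^ 2 / σ2sq) / t)
      = exp (-(s₁ ^ 2 / (σ1sq * t))) * exp (-(s₂ ^ 2 / (σ2sq * t))) := by
    rw [← exp_add]
    ring_nf
  rw [hexp]
  ring

lemma pow_mul_pow_mul_bivRayleighPDFTerm (m n k : ℕ) (s₁ s₂ : ℝ) :
    s₁ ^ (2 * m) * s₂ ^ (2 * n) * bivRayleighPDFTerm σ1sq σ2sq ρsq k s₁ s₂
      = 4 * ρsq ^ k / (σ1sq ^ (k + 1) * σ2sq ^ (k + 1) * (1 - ρsq) ^ (2 * k + 1) * (k ! : ℝ) ^ 2)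
        * ((s₁ ^ (2 * (m + k) + 1) * exp (-(s₁ ^ 2 / (σ1sq * (1 - ρsq)))))
          * (s₂ ^ (2 * (n + k) + 1) * exp (-(s₂ ^ 2 / (σ2sq * (1 - ρsq)))))) := by
  rw [bivRayleighPDFTerm]
  ring

lemma integrableOn_pow_mul_pow_mul_bivRayleighPDFTerm (h1 : 0 < σ1sq) (h2 : 0 < σ2sq)
    (hρ1 : ρsq < 1) (m n k : ℕ) :
    IntegrableOn (fun p : ℝ × ℝ => p.1 ^ (2 * m) * p.2 ^ (2 * n)
      * bivRayleighPDFTerm σ1sq σ2sq ρsq k p.1 p.2) (Ioi 0 ×ˢ Ioi 0) := by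
  have ht : 0 < 1 - ρsq := sub_pos.mpr hρ1
  simp_rw [pow_mul_pow_mul_bivRayleighPDFTerm]
  rw [IntegrableOn, Measure.volume_eq_prod, ← Measure.prod_restrict]
  exact ((integrableOn_pow_mul_exp_neg_sq_div (m + k) (mul_pos h1 ht)).mul_prod
    (integrableOn_pow_mul_exp_neg_sq_div (n + k) (mul_pos h2 ht))).const_mul _

lemma integral_pow_mul_pow_mul_bivRayleighPDFTerm (h1 : 0 < σ1sq) (h2 : 0 < σ2sq)
    (hρ1 : ρsq < 1) (m n k : ℕ) :
    ∫ p in Ioi 0 ×ˢ Ioi 0, p.1 ^ (2 * m) * p.2 ^ (2 * n)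
        * bivRayleighPDFTerm σ1sq σ2sq ρsq k p.1 p.2
      = σ1sq ^ m * σ2sq ^ n * (1 - ρsq) ^ (m + n + 1)
        * ((m + k)! * (n + k)! / (k ! : ℝ) ^ 2 * ρsq ^ k) := by
  have ht : 0 < 1 - ρsq := sub_pos.mpr hρ1
  simp_rw [pow_mul_pow_mul_bivRayleighPDFTerm]
  rw [integral_const_mul, Measure.volume_eq_prod,
    setIntegral_prod_mul (fun s => s ^ (2 * (m + k) + 1) * exp (-(s ^ 2 / (σ1sq * (1 - ρsq)))))
      (fun s => s ^ (2 * (n + k) + 1) * exp (-(s ^ 2 / (σ2sq * (1 - ρsq))))),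
    integral_pow_mul_exp_neg_sq_div _ (mul_pos h1 ht),
    integral_pow_mul_exp_neg_sq_div _ (mul_pos h2 ht)]
  generalize 1 - ρsq = t at ht ⊢
  field_simp
  ring

theorem bivRayleighMoment_pow_mul_pow (h1 : 0 < σ1sq) (h2 : 0 < σ2sq) (hρ0 : 0 ≤ ρsq)
    (hρ1 : ρsq < 1) (m n : ℕ) {D : ℝ}
    (hD : HasSum (fun k : ℕ => (m + k)! * (n + k)! / (k ! : ℝ) ^ 2 * ρsq ^ k) D) :
    bivRayleighMoment σ1sq σ2sq ρsq (fun s₁ s₂ => s₁ ^ (2 * m) * s₂ ^ (2 * n))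
      = σ1sq ^ m * σ2sq ^ n * (1 - ρsq) ^ (m + n + 1) * D := by
  have hS : MeasurableSet (Ioi (0:ℝ) ×ˢ Ioi (0:ℝ)) := measurableSet_Ioi.prod measurableSet_Ioi
  set F : ℕ → ℝ × ℝ → ℝ := fun k p =>
    p.1 ^ (2 * m) * p.2 ^ (2 * n) * bivRayleighPDFTerm σ1sq σ2sq ρsq k p.1 p.2
  have hF_nonneg : ∀ k, ∀ p ∈ Ioi (0:ℝ) ×ˢ Ioi (0:ℝ), 0 ≤ F k p := by
    rintro k ⟨s₁, s₂⟩ ⟨hs₁, hs₂⟩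
    have ht : 0 < 1 - ρsq := sub_pos.mpr hρ1
    simp only [mem_Ioi] at hs₁ hs₂
    simp only [F, bivRayleighPDFTerm]
    positivity
  have hF_sum : HasSum (fun k => ∫ p in Ioi 0 ×ˢ Ioi 0, F k p)
      (σ1sq ^ m * σ2sq ^ n * (1 - ρsq) ^ (m + n + 1) * D) := by
    simpa only [F, integral_pow_mul_pow_mul_bivRayleighPDFTerm h1 h2 hρ1] using hD.mul_left _
  have hF_norm :
      (fun k => ∫ p in Ioi 0 ×ˢ Ioi 0, ‖F k p‖) = fun k => ∫ p in Ioi 0 ×ˢ Ioi 0, F k p :=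
    funext fun k => setIntegral_congr_fun hS fun p hp => Real.norm_of_nonneg (hF_nonneg k p hp)
  have hswap := hasSum_integral_of_summable_integral_norm
    (integrableOn_pow_mul_pow_mul_bivRayleighPDFTerm h1 h2 hρ1 m n) (hF_norm ▸ hF_sum.summable)
  refine (setIntegral_congr_fun hS fun p _ => ?_).trans (hswap.unique hF_sum)
  exact (((hasSum_bivRayleighPDFTerm h1.le h2.le hρ0 p.1 p.2).mul_left
    (p.1 ^ (2 * m) * p.2 ^ (2 * n))).tsum_eq).symm

theorem bivRayleighMoment_pow_left (h1 : 0 < σ1sq) (h2 : 0 < σ2sq) (hρ0 : 0 ≤ ρsq)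
    (hρ1 : ρsq < 1) (m : ℕ) :
    bivRayleighMoment σ1sq σ2sq ρsq (fun s₁ _ => s₁ ^ (2 * m)) = m ! * σ1sq ^ m := by
  have ht : 1 - ρsq ≠ 0 := (sub_pos.mpr hρ1).ne'
  have h := bivRayleighMoment_pow_mul_pow h1 h2 hρ0 hρ1 m 0
    ((hasSum_factorial_add_div_factorial_mul_geometric m (abs_lt.mpr ⟨by linarith, hρ1⟩)).congr_fun
      fun k => by rw [zero_add]; field_simp)
  simp only [mul_zero, pow_zero, mul_one, add_zero] at h
  rw [h]
  field_simp

theorem bivRayleighMoment_pow_right (h1 : 0 < σ1sq) (h2 : 0 < σ2sq) (hρ0 : 0 ≤ ρsq)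
    (hρ1 : ρsq < 1) (n : ℕ) :
    bivRayleighMoment σ1sq σ2sq ρsq (fun _ s₂ => s₂ ^ (2 * n)) = n ! * σ2sq ^ n := by
  have ht : 1 - ρsq ≠ 0 := (sub_pos.mpr hρ1).ne'
  have h := bivRayleighMoment_pow_mul_pow h1 h2 hρ0 hρ1 0 n
    ((hasSum_factorial_add_div_factorial_mul_geometric n (abs_lt.mpr ⟨by linarith, hρ1⟩)).congr_fun
      fun k => by rw [zero_add]; field_simp)
  simp only [mul_zero, pow_zero, one_mul, zero_add] at h
  rw [h]
  field_simp

theorem bivRayleighMoment_sq_mul_sq (h1 : 0 < σ1sq) (h2 : 0 < σ2sq) (hρ0 : 0 ≤ ρsq)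
    (hρ1 : ρsq < 1) :
    bivRayleighMoment σ1sq σ2sq ρsq (fun s₁ s₂ => s₁ ^ 2 * s₂ ^ 2)
      = σ1sq * σ2sq * (1 + ρsq) := by
  have ht : 1 - ρsq ≠ 0 := (sub_pos.mpr hρ1).ne'
  have h := bivRayleighMoment_pow_mul_pow h1 h2 hρ0 hρ1 1 1
    ((hasSum_succ_sq_mul_geometric (abs_lt.mpr ⟨by linarith, hρ1⟩)).congr_fun fun k => by
      rw [add_comm 1 k, Nat.factorial_succ]
      push_cast
      field_simp)
  rw [h]
  field_simp

end

/-- The Pearson correlation coefficient of S₁² and S₂² under the bivariate Rayleigh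
law equals the power correlation coefficient ρ². -/
theorem bivRayleigh_power_correlation (σ1sq σ2sq ρsq : ℝ)
    (h1 : 0 < σ1sq) (h2 : 0 < σ2sq) (hρ0 : 0 ≤ ρsq) (hρ1 : ρsq < 1) :
    (bivRayleighMoment σ1sq σ2sq ρsq (fun s₁ s₂ => s₁^2 * s₂^2)
        - bivRayleighMoment σ1sq σ2sq ρsq (fun s₁ _ => s₁^2)
          * bivRayleighMoment σ1sq σ2sq ρsq (fun _ s₂ => s₂^2))
      / Real.sqrt
          ((bivRayleighMoment σ1sq σ2sq ρsq (fun s₁ _ => s₁^4)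
              - (bivRayleighMoment σ1sq σ2sq ρsq (fun s₁ _ => s₁^2))^2)
            * (bivRayleighMoment σ1sq σ2sq ρsq (fun _ s₂ => s₂^4)
              - (bivRayleighMoment σ1sq σ2sq ρsq (fun _ s₂ => s₂^2))^2))
      = ρsq := by
  have hE₁ := bivRayleighMoment_pow_left h1 h2 hρ0 hρ1 1
  have hE₁' := bivRayleighMoment_pow_left h1 h2 hρ0 hρ1 2
  have hE₂ := bivRayleighMoment_pow_right h1 h2 hρ0 hρ1 1
  have hE₂' := bivRayleighMoment_pow_right h1 h2 hρ0 hρ1 2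
  norm_num at hE₁ hE₁' hE₂ hE₂'
  rw [bivRayleighMoment_sq_mul_sq h1 h2 hρ0 hρ1, hE₁, hE₁', hE₂, hE₂',
    show (2 * σ1sq ^ 2 - σ1sq ^ 2) * (2 * σ2sq ^ 2 - σ2sq ^ 2) = (σ1sq * σ2sq) ^ 2 by ring,
    sqrt_sq (by positivity)]
  field_simp
  ring
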